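/- arXiv:2211.03735 — 2 statements merged into one kernel-verified Lean document; each statement's English description precedes it below -/
import Mathlib

section
/- Let $T>0$, $\lambda>1$, and $c_1,c_2>0$. Suppose $F:[0,T]\to[0,\infty)$ is differentiable and satisfies $F'(t)+c_1 F(t)^\lambda \le c_2$ for all $t\in[0,T]$. Then for every $0<t\le T$, $F(t)\le \max\Big( \frac{F(0)}{(1+t\,F(0)^{\lambda-1}(\lambda-1)\tfrac{c_1}{2})^{1/(\lambda-1)}},\ \big(\tfrac{2c_2}{c_1}\big)^{1/\lambda}\Big)$, and in particular $F(t)\le \max\Big( t^{-1/(\lambda-1)}\big((\lambda-1)\tfrac{c_1}{2}\big)^{-1/(\lambda-1)},\ \big(\tfrac{2c_2}{c_1}\big)^{1/\lambda}\Big)$. -/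
open Set

/-- Coming down from infinity ODE lemma: if `F : [0,T] → [0,∞)` is differentiable and
satisfies `F'(t) + c₁ F(t)^λ ≤ c₂` on `[0,T]` with `λ > 1`, then for `0 < t ≤ T`,
`F(t) ≤ max( F(0) / (1 + t F(0)^{λ-1}(λ-1)c₁/2)^{1/(λ-1)} , (2c₂/c₁)^{1/λ} )`, and in
particular `F(t) ≤ max( t^{-1/(λ-1)} ((λ-1)c₁/2)^{-1/(λ-1)} , (2c₂/c₁)^{1/λ} )`. -/
theorem stmt1 (T lam c₁ c₂ : ℝ) (hT : 0 < T) (hlam : 1 < lam) (hc₁ : 0 < c₁) (hc₂ : 0 < c₂)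
    (F F' : ℝ → ℝ)
    (hF_nonneg : ∀ t ∈ Icc (0 : ℝ) T, 0 ≤ F t)
    (hF_deriv : ∀ t ∈ Icc (0 : ℝ) T, HasDerivWithinAt F (F' t) (Icc (0 : ℝ) T) t)
    (hF_ineq : ∀ t ∈ Icc (0 : ℝ) T, F' t + c₁ * F t ^ lam ≤ c₂) :
    ∀ t : ℝ, 0 < t → t ≤ T →
      F t ≤ max (F 0 / (1 + t * F 0 ^ (lam - 1) * ((lam - 1) * (c₁ / 2))) ^ (1 / (lam - 1)))
              ((2 * c₂ / c₁) ^ (1 / lam)) ∧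
      F t ≤ max (t ^ (-(1 / (lam - 1))) * ((lam - 1) * (c₁ / 2)) ^ (-(1 / (lam - 1))))
              ((2 * c₂ / c₁) ^ (1 / lam)) := by
  intro t ht htT
  have hlam0 : (0:ℝ) < lam := by linarith
  have hlam1 : (0:ℝ) < lam - 1 := by linarith
  set A : ℝ := (lam - 1) * (c₁ / 2) with hA
  have hA0 : 0 < A := by positivity
  set M : ℝ := (2 * c₂ / c₁) ^ (1 / lam) with hMdef
  have hM0 : 0 < M := Real.rpow_pos_of_pos (by positivity) _
  have hMlam : M ^ lam = 2 * c₂ / c₁ := by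
    rw [hMdef, one_div, Real.rpow_inv_rpow (by positivity) (ne_of_gt hlam0)]
  have hcont : ContinuousOn F (Icc 0 T) := fun s hs => (hF_deriv s hs).continuousWithinAt
  -- key derivative bound when F s > M
  have hkey : ∀ s ∈ Icc (0:ℝ) T, M ≤ F s → F' s ≤ -(c₁/2) * F s ^ lam := by
    intro s hs hMF
    have h1 := hF_ineq s hs
    have h2 : M ^ lam ≤ F s ^ lam := Real.rpow_le_rpow (le_of_lt hM0) hMF (le_of_lt hlam0)
    rw [hMlam] at h2
    have : 2 * c₂ ≤ c₁ * F s ^ lam := by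
      rw [div_le_iff₀ hc₁] at h2; linarith [mul_comm (F s ^ lam) c₁]
    linarith
  have hderivAt : ∀ s ∈ Ioo (0:ℝ) T, HasDerivAt F (F' s) s := by
    intro s hs
    exact (hF_deriv s (Ioo_subset_Icc_self hs)).hasDerivAt (Icc_mem_nhds hs.1 hs.2)
  by_cases hcase : ∃ s ∈ Icc (0:ℝ) t, F s ≤ M
  · -- Case 1: F touches M before t; then F t ≤ M.
    have hFtM : F t ≤ M := by
      set S : Set ℝ := Icc 0 t ∩ F ⁻¹' (Iic M) with hSdef
      have hIccsub : Icc (0:ℝ) t ⊆ Icc 0 T := Icc_subset_Icc le_rfl htT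
      have hSclosed : IsClosed S :=
        (hcont.mono hIccsub).preimage_isClosed_of_isClosed isClosed_Icc isClosed_Iic
      obtain ⟨s0, hs0, hFs0⟩ := hcase
      have hSne : S.Nonempty := ⟨s0, hs0, hFs0⟩
      have hSbdd : BddAbove S := bddAbove_Icc.mono inter_subset_left
      have hsmem : sSup S ∈ S := hSclosed.csSup_mem hSne hSbdd
      set s₁ := sSup S with hs₁
      have hs₁Icc : s₁ ∈ Icc (0:ℝ) t := hsmem.1
      have hFs₁ : F s₁ ≤ M := hsmem.2
      have hgtM : ∀ s ∈ Ioc s₁ t, M < F s := by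
        intro s hsm
        by_contra hle
        push_neg at hle
        have : s ∈ S := ⟨⟨le_trans hs₁Icc.1 (le_of_lt hsm.1), hsm.2⟩, hle⟩
        exact absurd (le_csSup hSbdd this) (not_le.mpr hsm.1)
      have hanti : AntitoneOn F (Icc s₁ t) := by
        apply antitoneOn_of_deriv_nonpos (convex_Icc _ _)
        · exact hcont.mono (Icc_subset_Icc hs₁Icc.1 htT)
        · intro s hs
          rw [interior_Icc] at hs
          have hsIooT : s ∈ Ioo (0:ℝ) T :=
            ⟨lt_of_le_of_lt hs₁Icc.1 hs.1, lt_of_lt_of_le hs.2 htT⟩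
          exact ((hderivAt s hsIooT).differentiableAt).differentiableWithinAt
        · intro s hs
          rw [interior_Icc] at hs
          have hsIooT : s ∈ Ioo (0:ℝ) T :=
            ⟨lt_of_le_of_lt hs₁Icc.1 hs.1, lt_of_lt_of_le hs.2 htT⟩
          rw [(hderivAt s hsIooT).deriv]
          have hMF : M ≤ F s := le_of_lt (hgtM s ⟨hs.1, le_of_lt hs.2⟩)
          have := hkey s (Ioo_subset_Icc_self hsIooT) hMF
          have hFpos : 0 < F s := lt_of_lt_of_le hM0 hMF
          have : F' s ≤ -(c₁/2) * F s ^ lam := this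
          nlinarith [Real.rpow_pos_of_pos hFpos lam]
      calc F t ≤ F s₁ := hanti ⟨le_rfl, hs₁Icc.2⟩ ⟨hs₁Icc.2, le_rfl⟩ hs₁Icc.2
        _ ≤ M := hFs₁
    exact ⟨le_trans hFtM (le_max_right _ _), le_trans hFtM (le_max_right _ _)⟩
  · -- Case 2: F > M on all of [0, t]
    push_neg at hcase
    have hFpos : ∀ s ∈ Icc (0:ℝ) t, M < F s := hcase
    have hIccsub : Icc (0:ℝ) t ⊆ Icc 0 T := Icc_subset_Icc le_rfl htT
    -- monotone auxiliary function ψ s = F s ^ (1 - lam) - A * s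
    set ψ : ℝ → ℝ := fun s => F s ^ (1 - lam) - A * s with hψ
    have hmono : MonotoneOn ψ (Icc 0 t) := by
      apply monotoneOn_of_deriv_nonneg (convex_Icc _ _)
      · apply ContinuousOn.sub
        · apply ContinuousOn.rpow_const (hcont.mono hIccsub)
          intro s hs
          exact Or.inl (ne_of_gt (lt_of_lt_of_le hM0 (le_of_lt (hFpos s hs))))
        · exact (continuous_const.mul continuous_id).continuousOn
      · intro s hs
        rw [interior_Icc] at hs
        have hsIooT : s ∈ Ioo (0:ℝ) T := ⟨hs.1, lt_of_lt_of_le hs.2 htT⟩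
        have hne : F s ≠ 0 :=
          ne_of_gt (lt_trans hM0 (hFpos s (Ioo_subset_Icc_self hs)))
        have h1 : HasDerivAt (fun y => F y ^ (1 - lam)) (F' s * (1 - lam) * F s ^ (1 - lam - 1)) s :=
          (hderivAt s hsIooT).rpow_const (Or.inl hne)
        exact ((h1.sub ((hasDerivAt_id s).const_mul A)).differentiableAt).differentiableWithinAt
      · intro s hs
        rw [interior_Icc] at hs
        have hsIooT : s ∈ Ioo (0:ℝ) T := ⟨hs.1, lt_of_lt_of_le hs.2 htT⟩
        have hFs : M < F s := hFpos s (Ioo_subset_Icc_self hs)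
        have hFspos : 0 < F s := lt_trans hM0 hFs
        have hne : F s ≠ 0 := ne_of_gt hFspos
        have h1 : HasDerivAt (fun y => F y ^ (1 - lam)) (F' s * (1 - lam) * F s ^ (1 - lam - 1)) s :=
          (hderivAt s hsIooT).rpow_const (Or.inl hne)
        have h2 : HasDerivAt ψ (F' s * (1 - lam) * F s ^ (1 - lam - 1) - A) s := by
          have h3 := h1.sub ((hasDerivAt_id s).const_mul A)
          rw [mul_one] at h3
          exact h3
        rw [h2.deriv]
        have hder := hkey s (Ioo_subset_Icc_self hsIooT) (le_of_lt hFs)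
        -- F' s * (1 - lam) ≥ A * F s ^ lam
        have hmul : A * F s ^ lam ≤ F' s * (1 - lam) := by
          have := mul_le_mul_of_nonpos_right hder (by linarith : (1:ℝ) - lam ≤ 0)
          calc A * F s ^ lam = -(c₁/2) * F s ^ lam * (1 - lam) := by rw [hA]; ring
            _ ≤ F' s * (1 - lam) := this
        have hposl : 0 < F s ^ lam := Real.rpow_pos_of_pos hFspos lam
        have hpow : F s ^ (1 - lam - 1) = (F s ^ lam)⁻¹ := by
          rw [← Real.rpow_neg (le_of_lt hFspos)]
          congr 1; ring
        have : A ≤ F' s * (1 - lam) * F s ^ (1 - lam - 1) := by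
          rw [hpow]
          have h3 := mul_le_mul_of_nonneg_right hmul (le_of_lt (inv_pos.mpr hposl))
          rwa [mul_assoc, mul_inv_cancel₀ (ne_of_gt hposl), mul_one] at h3
        linarith
    have hψineq := hmono (left_mem_Icc.mpr (le_of_lt ht)) (right_mem_Icc.mpr (le_of_lt ht))
      (le_of_lt ht)
    have hF0pos : 0 < F 0 := lt_trans hM0 (hFpos 0 (left_mem_Icc.mpr (le_of_lt ht)))
    have hFtpos : 0 < F t := lt_trans hM0 (hFpos t (right_mem_Icc.mpr (le_of_lt ht)))
    have hmain : F 0 ^ (1 - lam) + A * t ≤ F t ^ (1 - lam) := by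
      have : ψ 0 ≤ ψ t := hψineq
      simp only [hψ, mul_zero, sub_zero] at this
      linarith
    have hexp : -(1 / (lam - 1)) ≤ (0:ℝ) := by
      rw [neg_nonpos]; positivity
    have hFtrw : F t = (F t ^ (1 - lam)) ^ (-(1 / (lam - 1))) := by
      rw [← Real.rpow_mul (le_of_lt hFtpos)]
      have he1 : (1 - lam) * -(1 / (lam - 1)) = 1 := by field_simp; ring
      rw [he1, Real.rpow_one]
    -- Bound 2 first: F t ^ (1-lam) ≥ A * t
    have hbound2 : F t ≤ t ^ (-(1 / (lam - 1))) * A ^ (-(1 / (lam - 1))) := by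
      have hAt : 0 < A * t := mul_pos hA0 ht
      have h4 : A * t ≤ F t ^ (1 - lam) := by
        have : 0 < F 0 ^ (1 - lam) := Real.rpow_pos_of_pos hF0pos _
        linarith
      have h5 : (F t ^ (1 - lam)) ^ (-(1 / (lam - 1))) ≤ (A * t) ^ (-(1 / (lam - 1))) :=
        Real.rpow_le_rpow_of_nonpos hAt h4 hexp
      rw [← hFtrw] at h5
      calc F t ≤ (A * t) ^ (-(1 / (lam - 1))) := h5
        _ = t ^ (-(1 / (lam - 1))) * A ^ (-(1 / (lam - 1))) := by
            rw [mul_comm A t, Real.mul_rpow (le_of_lt ht) (le_of_lt hA0)]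
    -- Bound 1
    have hbound1 : F t ≤ F 0 / (1 + t * F 0 ^ (lam - 1) * A) ^ (1 / (lam - 1)) := by
      have h0 : F 0 ^ (1 - lam) * F 0 ^ (lam - 1) = 1 := by
        rw [← Real.rpow_add hF0pos]
        have : (1 - lam) + (lam - 1) = 0 := by ring
        rw [this, Real.rpow_zero]
      have hfac : F 0 ^ (1 - lam) + A * t = F 0 ^ (1 - lam) * (1 + t * F 0 ^ (lam - 1) * A) := by
        linear_combination (-(t * A)) * h0
      have hDpos : 0 < 1 + t * F 0 ^ (lam - 1) * A := by
        have hB : 0 < F 0 ^ (lam - 1) := Real.rpow_pos_of_pos hF0pos _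
        have := mul_pos (mul_pos ht hB) hA0
        linarith
      have hRpos : 0 < F 0 ^ (1 - lam) * (1 + t * F 0 ^ (lam - 1) * A) :=
        mul_pos (Real.rpow_pos_of_pos hF0pos _) hDpos
      have h4 : F 0 ^ (1 - lam) * (1 + t * F 0 ^ (lam - 1) * A) ≤ F t ^ (1 - lam) := by
        rw [← hfac]; exact hmain
      have h5 := Real.rpow_le_rpow_of_nonpos hRpos h4 hexp
      rw [← hFtrw] at h5
      have h6 : (F 0 ^ (1 - lam) * (1 + t * F 0 ^ (lam - 1) * A)) ^ (-(1 / (lam - 1)))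
          = F 0 / (1 + t * F 0 ^ (lam - 1) * A) ^ (1 / (lam - 1)) := by
        rw [Real.mul_rpow (le_of_lt (Real.rpow_pos_of_pos hF0pos _)) (le_of_lt hDpos)]
        rw [← Real.rpow_mul (le_of_lt hF0pos)]
        have he1 : (1 - lam) * -(1 / (lam - 1)) = 1 := by field_simp; ring
        rw [he1, Real.rpow_one, Real.rpow_neg (le_of_lt hDpos), div_eq_mul_inv]
        norm_num [div_eq_mul_inv]
      rw [h6] at h5
      exact h5
    exact ⟨le_trans hbound1 (le_max_left _ _), le_trans hbound2 (le_max_left _ _)⟩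
end

section
/- Define $\widehat{\mathcal{S}(t)}(\eta)$ as above with $\langle\!\langle\eta\rangle\!\rangle=\sqrt{3/4+|\eta|^2}$, and set $\langle\eta\rangle=(1+|\eta|^2)^{1/2}$. Then there exists $C>0$ such that for all $t\ge0$ and $\eta\in\mathbb{R}^2$, $\big|(\widehat{\mathcal{S}(t)}(\eta))^2(1-e^{-\langle 2\pi\eta\rangle^2})-e^{-t}\cos^2(t\langle\!\langle 2\pi\eta\rangle\!\rangle)\big|\le \frac{C}{\langle\eta\rangle}$. -/
open Real

/-- `⟨⟨r⟩⟩ = √(3/4 + r²)`. -/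
noncomputable def jbb (r : ℝ) : ℝ := Real.sqrt (3 / 4 + r ^ 2)

/-- The symbol of the damped wave propagator `𝒮(t)` for position data:
`Ŝ(t)(η) = e^{-t/2} cos(t⟨⟨2πη⟩⟩) + (1/2) e^{-t/2} sin(t⟨⟨2πη⟩⟩)/⟨⟨2πη⟩⟩`. -/
noncomputable def Shat (t : ℝ) (η : EuclideanSpace ℝ (Fin 2)) : ℝ :=
  Real.exp (-t / 2) * Real.cos (t * jbb (2 * Real.pi * ‖η‖)) +
    (1 / 2) * Real.exp (-t / 2) * Real.sin (t * jbb (2 * Real.pi * ‖η‖))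
      / jbb (2 * Real.pi * ‖η‖)

set_option maxHeartbeats 1000000 in
/-- Uniformly in `t ≥ 0` and `η ∈ ℝ²`,
`|(Ŝ(t)(η))²(1 - e^{-⟨2πη⟩²}) - e^{-t} cos²(t⟨⟨2πη⟩⟩)| ≤ C/⟨η⟩`,
where `⟨η⟩ = (1+|η|²)^{1/2}` and `⟨2πη⟩² = 1 + (2π|η|)²`. -/
theorem stmt13 :
    ∃ C : ℝ, 0 < C ∧ ∀ t : ℝ, 0 ≤ t → ∀ η : EuclideanSpace ℝ (Fin 2),
      |(Shat t η) ^ 2 * (1 - Real.exp (-(1 + (2 * Real.pi * ‖η‖) ^ 2))) -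
          Real.exp (-t) * Real.cos (t * jbb (2 * Real.pi * ‖η‖)) ^ 2| ≤
        C / Real.sqrt (1 + ‖η‖ ^ 2) := by
  refine ⟨4, by norm_num, fun t ht η => ?_⟩
  simp only [Shat]
  set r : ℝ := 2 * Real.pi * ‖η‖ with hr
  have hpi := Real.pi_gt_three
  have hnn : (0:ℝ) ≤ ‖η‖ := norm_nonneg _
  have hrnn : 0 ≤ r := by positivity
  have hrn : ‖η‖ ≤ r := by nlinarith
  set j : ℝ := jbb r with hjdef
  have hj2 : j ^ 2 = 3 / 4 + r ^ 2 := Real.sq_sqrt (by positivity)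
  have hjpos : 0 < j := by
    rw [hjdef, jbb]; positivity
  set s : ℝ := Real.sqrt (1 + ‖η‖ ^ 2) with hs
  have hs2 : s ^ 2 = 1 + ‖η‖ ^ 2 := Real.sq_sqrt (by positivity)
  have hspos : 0 < s := by rw [hs]; positivity
  have hs1 : 1 ≤ s := by nlinarith
  have hsj : s ≤ 2 * j := by nlinarith
  set a : ℝ := Real.exp (-t / 2) with ha
  have hapos : 0 < a := Real.exp_pos _
  have ha1 : a ≤ 1 := Real.exp_le_one_iff.2 (by linarith)
  have haa : Real.exp (-t) = a ^ 2 := by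
    rw [ha, sq, ← Real.exp_add]; norm_num
  set c : ℝ := Real.cos (t * j) with hc
  set sn : ℝ := Real.sin (t * j) with hsn
  have hcb : |c| ≤ 1 := Real.abs_cos_le_one _
  have hsnb : |sn| ≤ 1 := Real.abs_sin_le_one _
  set E : ℝ := Real.exp (-(1 + r ^ 2)) with hE
  have hE0 : 0 < E := Real.exp_pos _
  have hE1' : 1 + r ^ 2 ≤ Real.exp (1 + r ^ 2) := by
    have := Real.add_one_le_exp (1 + r ^ 2)
    linarith
  have hE1 : E ≤ 1 / (1 + r ^ 2) := by
    rw [hE, Real.exp_neg]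
    rw [inv_eq_one_div]
    apply one_div_le_one_div_of_le (by positivity) hE1'
  have hEs : E ≤ 1 / s := by
    have h1 : 1 + r ^ 2 ≥ s := by nlinarith
    have : 1 / (1 + r ^ 2) ≤ 1 / s := one_div_le_one_div_of_le hspos h1
    linarith
  have hEle1 : E ≤ 1 := Real.exp_le_one_iff.2 (by nlinarith)
  set T : ℝ := a * c + 1 / 2 * a * sn / j with hT
  clear_value T E sn c a s j r
  -- difference bound
  have hdiff : |T ^ 2 - a ^ 2 * c ^ 2| ≤ 1 / j + 1 / (4 * j ^ 2) := by
    have hexp : T ^ 2 - a ^ 2 * c ^ 2 =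
        a ^ 2 * c * sn / j + a ^ 2 * sn ^ 2 / (4 * j ^ 2) := by
      rw [hT]; field_simp; ring
    rw [hexp]
    have h1 : |a ^ 2 * c * sn / j| ≤ 1 / j := by
      rw [abs_div, abs_of_pos hjpos]
      gcongr
      calc |a ^ 2 * c * sn| = a ^ 2 * |c| * |sn| := by
            rw [abs_mul, abs_mul, abs_of_pos (by positivity : (0:ℝ) < a ^ 2)]
        _ ≤ 1 * 1 * 1 := by
            apply mul_le_mul (mul_le_mul (by nlinarith) hcb (abs_nonneg _) (by norm_num))
              hsnb (abs_nonneg _) (by norm_num)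
        _ = 1 := by norm_num
    have h2 : |a ^ 2 * sn ^ 2 / (4 * j ^ 2)| ≤ 1 / (4 * j ^ 2) := by
      rw [abs_div, abs_of_pos (by positivity : (0:ℝ) < 4 * j ^ 2)]
      gcongr
      rw [abs_of_nonneg (by positivity : (0:ℝ) ≤ a ^ 2 * sn ^ 2)]
      have : sn ^ 2 ≤ 1 := by rw [← sq_abs]; nlinarith [abs_nonneg sn]
      nlinarith
    calc |a ^ 2 * c * sn / j + a ^ 2 * sn ^ 2 / (4 * j ^ 2)|
        ≤ |a ^ 2 * c * sn / j| + |a ^ 2 * sn ^ 2 / (4 * j ^ 2)| := abs_add_le _ _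
      _ ≤ 1 / j + 1 / (4 * j ^ 2) := add_le_add h1 h2
  have hkey : |T ^ 2 * (1 - E) - a ^ 2 * c ^ 2| ≤ |T ^ 2 - a ^ 2 * c ^ 2| + E := by
    have hid : T ^ 2 * (1 - E) - a ^ 2 * c ^ 2 =
        (T ^ 2 - a ^ 2 * c ^ 2) * (1 - E) - a ^ 2 * c ^ 2 * E := by ring
    rw [hid]
    have hb1 : |(T ^ 2 - a ^ 2 * c ^ 2) * (1 - E)| ≤ |T ^ 2 - a ^ 2 * c ^ 2| := by
      rw [abs_mul, abs_of_nonneg (by linarith : (0:ℝ) ≤ 1 - E)]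
      nlinarith [abs_nonneg (T ^ 2 - a ^ 2 * c ^ 2)]
    have hc2 : c ^ 2 ≤ 1 := by rw [← sq_abs]; nlinarith [abs_nonneg c]
    have hb2 : |a ^ 2 * c ^ 2 * E| ≤ E := by
      rw [abs_of_nonneg (by positivity)]
      have ha2 : a ^ 2 ≤ 1 := by nlinarith
      have hac : (0:ℝ) ≤ 1 - a ^ 2 * c ^ 2 := by nlinarith [sq_nonneg a, sq_nonneg c]
      nlinarith [mul_nonneg hE0.le hac]
    calc |(T ^ 2 - a ^ 2 * c ^ 2) * (1 - E) - a ^ 2 * c ^ 2 * E|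
        ≤ |(T ^ 2 - a ^ 2 * c ^ 2) * (1 - E)| + |a ^ 2 * c ^ 2 * E| := abs_sub _ _
      _ ≤ |T ^ 2 - a ^ 2 * c ^ 2| + E := add_le_add hb1 hb2
  -- final assembly
  have hfin : 1 / j + 1 / (4 * j ^ 2) + E ≤ 4 / s := by
    have h1 : 1 / j ≤ 2 / s := by
      rw [div_le_div_iff₀ hjpos hspos]; linarith
    have h2 : 1 / (4 * j ^ 2) ≤ 1 / s := by
      rw [div_le_div_iff₀ (by positivity) hspos]; nlinarith
    have : (2:ℝ) / s + 1 / s + 1 / s = 4 / s := by ring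
    linarith
  rw [haa]
  calc |T ^ 2 * (1 - E) - a ^ 2 * c ^ 2| ≤ |T ^ 2 - a ^ 2 * c ^ 2| + E := hkey
    _ ≤ 1 / j + 1 / (4 * j ^ 2) + E := by linarith
    _ ≤ 4 / s := hfin
end
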